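/- Let $n \ge 7$ be a prime. There is no primitive non-constant arithmetic progression of integers of the form $x_1^2, x_2^2, x_3^n, x_4^2, x_5^2$ (five terms, with exponent pattern $(2,2,n,2,2)$). -/

import Mathlib

/-!
Put `D = x₂² + d`. The progression gives `D² - d² = (x₂x₄)²` and `D² - 4d² = (x₁x₅)²` with `d`
and `D` coprime, so it suffices that `D² - c²` and `D² - 4c²` are never both squares for coprime
`c ≠ 0` and `D`. This follows by descent. Such a pair has `c` even and `D` odd, and halving
`g² - h² = 3c²`, where `D² - c² = g²` and `D² - 4c² = h²`, yields coprime `x, y` with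
`(x² + y²)(9x² + y²) = D²`. The two factors are coprime squares `s², t²`, and halving
`t² - s² = 8x²` yields coprime `c', D'` with `y² = (D'² - c'²)(D'² - 4c'²)`. Comparing these two
factors modulo `3` and `4`, either `(c', D')` itself or `(f, e)` with `D'² - c'² = -3f²` and
`D'² - 4c'² = -3e²` is again such a pair, with second entry smaller than `D` in absolute value.
-/

namespace Int

theorem isCoprime_of_forall_prime_dvd {a b : ℤ} (h : ∀ p : ℤ, Prime p → p ∣ a → ¬p ∣ b) :
    IsCoprime a b :=
  isCoprime_of_prime_dvd (fun ⟨ha, hb⟩ ↦ h 2 prime_two (ha ▸ dvd_zero 2) (hb ▸ dvd_zero 2)) h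

theorem exists_nonneg_sq_of_isCoprime {a b c : ℤ} (hab : IsCoprime a b) (ha : 0 ≤ a)
    (h : a * b = c ^ 2) : ∃ x, 0 ≤ x ∧ a = x ^ 2 := by
  obtain ⟨x, hx | hx⟩ := sq_of_isCoprime hab h
  · exact ⟨|x|, abs_nonneg x, by rw [sq_abs, hx]⟩
  · exact ⟨0, le_rfl, by nlinarith [sq_nonneg x]⟩

theorem exists_sq_of_mul_eq_prime_mul_sq {p m n z : ℤ} (hp : Prime p) (hp0 : 0 < p)
    (hmn : IsCoprime m n) (hm : 0 ≤ m) (hn : 0 ≤ n) (h : m * n = p * z ^ 2) :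
    ∃ x y, IsCoprime x y ∧ z ^ 2 = x ^ 2 * y ^ 2 ∧
      (m = p * x ^ 2 ∧ n = y ^ 2 ∨ m = y ^ 2 ∧ n = p * x ^ 2) := by
  wlog hpm : p ∣ m generalizing m n
  · have hpn : p ∣ n := (hp.dvd_or_dvd ⟨_, h⟩).resolve_left hpm
    obtain ⟨x, y, hxy, hz, hmn'⟩ := this hmn.symm hn hm (by rw [mul_comm, h]) hpn
    exact ⟨x, y, hxy, hz, (hmn'.imp And.symm And.symm).symm⟩
  obtain ⟨m₁, rfl⟩ := hpm
  have h₁ : m₁ * n = z ^ 2 := mul_left_cancel₀ hp.ne_zero (by rw [← h, mul_assoc])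
  have hm₁n : IsCoprime m₁ n := hmn.of_mul_left_right
  obtain ⟨x, -, rfl⟩ := exists_nonneg_sq_of_isCoprime hm₁n (nonneg_of_mul_nonneg_right hm hp0) h₁
  obtain ⟨y, -, rfl⟩ := exists_nonneg_sq_of_isCoprime hm₁n.symm hn (by rw [mul_comm, h₁])
  exact ⟨x, y, (IsCoprime.pow_iff two_pos two_pos).mp hm₁n, h₁.symm, .inl ⟨rfl, rfl⟩⟩

theorem exists_add_sub_of_odd {a b : ℤ} (ha : Odd a) (hb : Odd b) (hab : IsCoprime a b) :
    ∃ m n, IsCoprime m n ∧ a = m + n ∧ b = m - n := by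
  obtain ⟨m, hm⟩ := ha.add_odd hb
  obtain ⟨n, hn⟩ := ha.sub_odd hb
  obtain rfl : a = m + n := by linarith
  obtain rfl : b = m - n := by linarith
  obtain ⟨u, v, huv⟩ := hab
  exact ⟨m, n, ⟨u + v, u - v, by linear_combination huv⟩, rfl, rfl⟩

theorem even_of_four_dvd_sq_add_sq {a b : ℤ} (h : 4 ∣ a ^ 2 + b ^ 2) : Even a := by
  by_contra ha
  obtain ⟨k, rfl⟩ := not_even_iff_odd.mp ha
  have h4 := (ZMod.intCast_zmod_eq_zero_iff_dvd _ 4).mpr h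
  push_cast at h4
  revert h4
  generalize (k : ZMod 4) = k
  generalize (b : ZMod 4) = b
  revert k b
  decide

theorem sq_sub_four_mul_sq_ne_sq {c d e : ℤ} (hc : Odd c) (hd : Odd d) :
    d ^ 2 - 4 * c ^ 2 ≠ e ^ 2 := by
  obtain ⟨k, rfl⟩ := hc
  obtain ⟨j, rfl⟩ := hd
  intro h
  have h8 := congrArg (Int.cast : ℤ → ZMod 8) h
  push_cast at h8
  revert h8
  generalize (k : ZMod 8) = k
  generalize (j : ZMod 8) = j
  generalize (e : ZMod 8) = e
  revert k j e
  decide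

end Int

structure IsSquareDiffPair (c D : ℤ) : Prop where
  isCoprime : IsCoprime c D
  ne_zero : c ≠ 0
  exists_sq_sub_sq : ∃ g, D ^ 2 - c ^ 2 = g ^ 2
  exists_sq_sub_four_mul_sq : ∃ h, D ^ 2 - 4 * c ^ 2 = h ^ 2

namespace IsSquareDiffPair

variable {c D : ℤ}

theorem odd (hp : IsSquareDiffPair c D) : Odd D := by
  by_contra hD
  obtain ⟨k, rfl⟩ := Int.not_odd_iff_even.mp hD
  obtain ⟨g, hg⟩ := hp.exists_sq_sub_sq
  have hc : Even c := Int.even_of_four_dvd_sq_add_sq (b := g) ⟨k ^ 2, by linear_combination -hg⟩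
  exact Int.prime_two.not_isUnit <|
    hp.isCoprime.isUnit_of_dvd' (even_iff_two_dvd.mp hc) ⟨k, by ring⟩

theorem even (hp : IsSquareDiffPair c D) : Even c := by
  by_contra hc
  obtain ⟨h, hh⟩ := hp.exists_sq_sub_four_mul_sq
  exact Int.sq_sub_four_mul_sq_ne_sq (Int.not_even_iff_odd.mp hc) hp.odd hh

theorem isCoprime_of_sq_sub_sq {g h : ℤ} (hp : IsSquareDiffPair c D) (hg : D ^ 2 - c ^ 2 = g ^ 2)
    (hh : D ^ 2 - 4 * c ^ 2 = h ^ 2) : IsCoprime g h := by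
  refine Int.isCoprime_of_forall_prime_dvd fun q hq hqg hqh ↦ ?_
  have hqc : ¬q ∣ c := fun hqc ↦ hq.not_isUnit <| hp.isCoprime.isUnit_of_dvd' hqc <|
    hq.dvd_of_dvd_pow (n := 2) <| by
      rw [show D ^ 2 = g ^ 2 + c ^ 2 by linarith]
      exact dvd_add (dvd_pow hqg two_ne_zero) (dvd_pow hqc two_ne_zero)
  have hq3c : q ∣ 3 * c ^ 2 := by
    rw [show 3 * c ^ 2 = g ^ 2 - h ^ 2 by linarith]
    exact dvd_sub (dvd_pow hqg two_ne_zero) (dvd_pow hqh two_ne_zero)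
  have hq3 : Associated q 3 := hq.associated_of_dvd Int.prime_three <|
    (hq.dvd_or_dvd hq3c).resolve_right fun h ↦ hqc (hq.dvd_of_dvd_pow h)
  -- now `3 ∣ g` and `3 ∣ h`, so `9 ∣ g² - h² = 3c²`
  obtain ⟨g', rfl⟩ := hq3.dvd_iff_dvd_left.mp hqg
  obtain ⟨h', rfl⟩ := hq3.dvd_iff_dvd_left.mp hqh
  exact hqc <| hq3.dvd.trans <| Int.prime_three.dvd_of_dvd_pow (n := 2)
    ⟨g' ^ 2 - h' ^ 2, by linarith⟩

theorem exists_quartic (hp : IsSquareDiffPair c D) :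
    ∃ x y, IsCoprime x y ∧ x * y ≠ 0 ∧ (x ^ 2 + y ^ 2) * (9 * x ^ 2 + y ^ 2) = D ^ 2 := by
  obtain ⟨g, hg0, hg⟩ : ∃ g, 0 ≤ g ∧ D ^ 2 - c ^ 2 = g ^ 2 := by
    obtain ⟨g, hg⟩ := hp.exists_sq_sub_sq
    exact ⟨|g|, abs_nonneg g, by rw [sq_abs, hg]⟩
  obtain ⟨h, hh0, hh⟩ : ∃ h, 0 ≤ h ∧ D ^ 2 - 4 * c ^ 2 = h ^ 2 := by
    obtain ⟨h, hh⟩ := hp.exists_sq_sub_four_mul_sq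
    exact ⟨|h|, abs_nonneg h, by rw [sq_abs, hh]⟩
  have hD2 : Odd (D ^ 2) := hp.odd.pow
  have hc2 : Even (c ^ 2) := hp.even.pow_of_ne_zero two_ne_zero
  have hgo : Odd g := (Int.odd_pow' two_ne_zero).mp (hg ▸ hD2.sub_even hc2)
  have hho : Odd h := (Int.odd_pow' two_ne_zero).mp (hh ▸ hD2.sub_even (hc2.mul_left 4))
  obtain ⟨m, n, hmn, rfl, rfl⟩ :=
    Int.exists_add_sub_of_odd hgo hho (hp.isCoprime_of_sq_sub_sq hg hh)
  obtain ⟨c₁, rfl⟩ := hp.even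
  have hc₁ : c₁ ≠ 0 := fun h ↦ hp.ne_zero (by rw [h, add_zero])
  have hmn3 : m * n = 3 * c₁ ^ 2 :=
    mul_left_cancel₀ (by norm_num : (4 : ℤ) ≠ 0) (by linear_combination hh - hg)
  have hc₁2 : 0 < c₁ ^ 2 := by positivity
  obtain ⟨x, y, hxy, hc₁xy, hm | hm⟩ := Int.exists_sq_of_mul_eq_prime_mul_sq Int.prime_three
    three_pos hmn (by linarith) (by nlinarith) hmn3 <;>
  · refine ⟨x, y, hxy, fun h0 ↦ hc₁2.ne' (by rw [hc₁xy, ← mul_pow, h0]; ring), ?_⟩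
    obtain ⟨rfl, rfl⟩ := hm
    linear_combination -hg - 4 * hc₁xy

end IsSquareDiffPair

theorem exists_sq_eq_mul_of_quartic {x y w : ℤ} (hxy : IsCoprime x y) (hx : x ≠ 0) (hw : Odd w)
    (h : (x ^ 2 + y ^ 2) * (9 * x ^ 2 + y ^ 2) = w ^ 2) :
    ∃ c D, IsCoprime c D ∧ c ≠ 0 ∧ Odd D ∧ 2 * c ^ 2 + D ^ 2 ≤ |w| ∧
      y ^ 2 = (D ^ 2 - c ^ 2) * (D ^ 2 - 4 * c ^ 2) := by
  obtain ⟨hA, hB⟩ := Int.odd_mul.mp (h ▸ hw.pow)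
  have hAB : IsCoprime (x ^ 2 + y ^ 2) (9 * x ^ 2 + y ^ 2) := by
    have h8 : IsCoprime (x ^ 2 + y ^ 2) 8 := by
      obtain ⟨k, hk⟩ := hA
      rw [hk, show (8 : ℤ) = 2 ^ 3 by norm_num]
      exact IsCoprime.pow_right ⟨1, -k, by ring⟩
    have hx2 : IsCoprime (x ^ 2 + y ^ 2) (x ^ 2) := by
      simpa [add_comm] using ((IsCoprime.pow_iff two_pos two_pos).mpr hxy.symm).add_mul_left_left 1
    have h := (h8.mul_right hx2).add_mul_left_right 1
    rwa [show 8 * x ^ 2 + (x ^ 2 + y ^ 2) * 1 = 9 * x ^ 2 + y ^ 2 by ring] at h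
  obtain ⟨s, hs0, hs⟩ := Int.exists_nonneg_sq_of_isCoprime hAB (by positivity) h
  obtain ⟨t, ht0, ht⟩ :=
    Int.exists_nonneg_sq_of_isCoprime hAB.symm (by positivity) (by rw [mul_comm, h])
  have hso : Odd s := (Int.odd_pow' two_ne_zero).mp (hs ▸ hA)
  have hto : Odd t := (Int.odd_pow' two_ne_zero).mp (ht ▸ hB)
  have hwts : |w| = t * s :=
    (sq_eq_sq₀ (abs_nonneg w) (by positivity)).mp (by rw [sq_abs, ← h, hs, ht]; ring)
  rw [hs, ht] at hAB
  obtain ⟨m, n, hmn, rfl, rfl⟩ :=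
    Int.exists_add_sub_of_odd hto hso ((IsCoprime.pow_iff two_pos two_pos).mp hAB.symm)
  have hmn2 : m * n = 2 * x ^ 2 :=
    mul_left_cancel₀ (by norm_num : (4 : ℤ) ≠ 0) (by linear_combination hs - ht)
  have hx2 : 0 < x ^ 2 := by positivity
  have hs1 : 1 ≤ m - n := by obtain ⟨k, hk⟩ := hso; omega
  obtain ⟨c, D, hcD, hxcD, hmn' | hmn'⟩ := Int.exists_sq_of_mul_eq_prime_mul_sq Int.prime_two
    two_pos hmn (by linarith) (by nlinarith) hmn2 <;>
  obtain ⟨rfl, rfl⟩ := hmn' <;>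
  exact ⟨c, D, hcD, fun hc ↦ hx2.ne' (by rw [hxcD, hc]; ring),
    (Int.odd_pow' two_ne_zero).mp (by obtain ⟨k, hk⟩ := hto; exact ⟨k - c ^ 2, by linarith⟩),
    by nlinarith, mul_left_cancel₀ (by norm_num : (8 : ℤ) ≠ 0) (by linear_combination 9 * hs - ht)⟩

theorem isSquareDiffPair_of_not_three_dvd {c D y : ℤ} (hcD : IsCoprime c D) (hc : c ≠ 0)
    (hD : Odd D) (hy : y ≠ 0) (h : y ^ 2 = (D ^ 2 - c ^ 2) * (D ^ 2 - 4 * c ^ 2))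
    (h3 : ¬3 ∣ D ^ 2 - 4 * c ^ 2) : IsSquareDiffPair c D := by
  have hab : IsCoprime (D ^ 2 - 4 * c ^ 2) (D ^ 2 - c ^ 2) := by
    refine Int.isCoprime_of_forall_prime_dvd fun p hp hpb hpa ↦ ?_
    have hp3c : p ∣ 3 * c ^ 2 := by
      rw [show 3 * c ^ 2 = (D ^ 2 - c ^ 2) - (D ^ 2 - 4 * c ^ 2) by ring]
      exact dvd_sub hpa hpb
    have hpc : p ∣ c := (hp.dvd_or_dvd hp3c).elim
      (fun hp3 ↦ absurd ((hp.associated_of_dvd Int.prime_three hp3).dvd_iff_dvd_left.mp hpb) h3)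
      hp.dvd_of_dvd_pow
    have hpD : p ∣ D := hp.dvd_of_dvd_pow (n := 2) <| by
      rw [show D ^ 2 = (D ^ 2 - c ^ 2) + c ^ 2 by ring]
      exact dvd_add hpa (dvd_pow hpc two_ne_zero)
    exact hp.not_isUnit (hcD.isUnit_of_dvd' hpc hpD)
  obtain ⟨e, he | he⟩ := Int.sq_of_isCoprime hab (by rw [h]; ring)
  · have hy2 : 0 < y ^ 2 := by positivity
    have ha : 0 ≤ D ^ 2 - c ^ 2 := by nlinarith [sq_nonneg e]
    obtain ⟨g, -, hg⟩ := Int.exists_nonneg_sq_of_isCoprime hab.symm ha h.symm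
    exact ⟨hcD, hc, ⟨g, hg⟩, ⟨e, he⟩⟩
  · exact absurd (Int.even_of_four_dvd_sq_add_sq ⟨c ^ 2, by linarith⟩) (Int.not_even_iff_odd.mpr hD)

theorem exists_isSquareDiffPair_of_three_dvd {c D y : ℤ} (hcD : IsCoprime c D) (hD : Odd D)
    (hy : y ≠ 0) (h : y ^ 2 = (D ^ 2 - c ^ 2) * (D ^ 2 - 4 * c ^ 2))
    (h3 : 3 ∣ D ^ 2 - 4 * c ^ 2) : ∃ f e, IsSquareDiffPair f e ∧ |e| < 2 * c ^ 2 := by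
  obtain ⟨b, hb⟩ := h3
  obtain ⟨y, rfl⟩ : 3 ∣ y := Int.prime_three.dvd_of_dvd_pow (n := 2)
    ⟨3 * (b + c ^ 2) * b, by linear_combination h + (D ^ 2 - c ^ 2 + 3 * b) * hb⟩
  have hab : (b + c ^ 2) * b = y ^ 2 := mul_left_cancel₀ (by norm_num : (9 : ℤ) ≠ 0)
    (by linear_combination -h - (D ^ 2 - c ^ 2 + 3 * b) * hb)
  have hcop : IsCoprime (b + c ^ 2) b := by
    obtain ⟨u, v, huv⟩ := (IsCoprime.pow_iff two_pos two_pos).mpr hcD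
    exact ⟨u + 4 * v, -u - v, by linear_combination huv - v * hb⟩
  have hy0 : 0 < y ^ 2 := sq_pos_of_ne_zero (right_ne_zero_of_mul hy)
  obtain ⟨e, he | he⟩ := Int.sq_of_isCoprime hcop.symm (by rw [mul_comm, hab])
  · exact absurd (Int.even_of_four_dvd_sq_add_sq (b := e) ⟨c ^ 2 + e ^ 2, by linarith⟩)
      (Int.not_even_iff_odd.mpr hD)
  have hcop' : IsCoprime (-(b + c ^ 2)) (e ^ 2) := by
    simpa [he] using hcop.neg_neg
  obtain ⟨f, -, hf⟩ := Int.exists_nonneg_sq_of_isCoprime hcop' (by nlinarith [sq_nonneg e])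
    (show -(b + c ^ 2) * e ^ 2 = y ^ 2 by rw [show e ^ 2 = -b by linarith, neg_mul_neg, hab])
  rw [hf] at hcop'
  have hD2 : 0 < D ^ 2 :=
    sq_pos_of_ne_zero (by rintro rfl; exact Int.not_even_iff_odd.mpr hD Even.zero)
  refine ⟨f, e, ⟨(IsCoprime.pow_iff two_pos two_pos).mp hcop', ?_, ⟨c, by linarith⟩,
    ⟨D, by linarith⟩⟩, ?_⟩
  · rintro rfl
    nlinarith
  · nlinarith [Int.natAbs_le_self_sq e, Int.natCast_natAbs e]

theorem IsSquareDiffPair.exists_natAbs_lt {c D : ℤ} (hp : IsSquareDiffPair c D) :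
    ∃ c' D', IsSquareDiffPair c' D' ∧ D'.natAbs < D.natAbs := by
  obtain ⟨x, y, hxy, hxy0, h⟩ := hp.exists_quartic
  obtain ⟨c', D', hcD, hc, hD, hle, hy⟩ :=
    exists_sq_eq_mul_of_quartic hxy (left_ne_zero_of_mul hxy0) hp.odd h
  have hy0 : y ≠ 0 := right_ne_zero_of_mul hxy0
  suffices ∃ c'' D'', IsSquareDiffPair c'' D'' ∧ |D''| < 2 * c' ^ 2 + D' ^ 2 by
    obtain ⟨c'', D'', hp'', hlt⟩ := this
    exact ⟨c'', D'', hp'', by zify; linarith⟩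
  by_cases h3 : 3 ∣ D' ^ 2 - 4 * c' ^ 2
  · obtain ⟨f, e, hfe, hlt⟩ :=
      exists_isSquareDiffPair_of_three_dvd hcD hD hy0 hy h3
    exact ⟨f, e, hfe, by nlinarith⟩
  · refine ⟨c', D', isSquareDiffPair_of_not_three_dvd hcD hc hD hy0 hy h3, ?_⟩
    nlinarith [Int.natAbs_le_self_sq D', Int.natCast_natAbs D', sq_pos_of_ne_zero hc]

theorem not_isSquareDiffPair (c D : ℤ) : ¬IsSquareDiffPair c D := by
  induction hn : D.natAbs using Nat.strong_induction_on generalizing c D with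
  | _ n ih =>
    intro hp
    obtain ⟨c', D', hp', hlt⟩ := hp.exists_natAbs_lt
    exact ih _ (hn ▸ hlt) c' D' rfl hp'

theorem no_AP_22n22_general (n : ℕ) :
    ¬ ∃ (x₁ x₂ x₃ x₄ x₅ d : ℤ), d ≠ 0 ∧
      Int.gcd (x₁ ^ 2) (x₂ ^ 2) = 1 ∧
      x₂ ^ 2 - x₁ ^ 2 = d ∧
      x₃ ^ n - x₂ ^ 2 = d ∧
      x₄ ^ 2 - x₃ ^ n = d ∧
      x₅ ^ 2 - x₄ ^ 2 = d := by
  rintro ⟨x₁, x₂, x₃, x₄, x₅, d, hd, hgcd, h₁, h₂, h₃, h₄⟩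
  obtain ⟨a, b, hab⟩ := Int.isCoprime_iff_gcd_eq_one.mpr hgcd
  refine not_isSquareDiffPair d (x₂ ^ 2 + d)
    ⟨⟨-2 * a - b, a + b, by linear_combination hab + a * h₁⟩, hd,
      ⟨x₂ * x₄, by linear_combination -x₂ ^ 2 * (h₂ + h₃)⟩,
      ⟨x₁ * x₅, by linear_combination x₅ ^ 2 * h₁ - (x₂ ^ 2 - d) * (h₂ + h₃ + h₄)⟩⟩

/-- For a prime `n ≥ 7`, there is no primitive non-constant arithmetic progression
of integers of the form `x₁², x₂², x₃ⁿ, x₄², x₅²`. -/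
theorem no_AP_22n22 (n : ℕ) (hn : n.Prime) (hn7 : 7 ≤ n) :
    ¬ ∃ (x₁ x₂ x₃ x₄ x₅ d : ℤ), d ≠ 0 ∧
      Int.gcd (x₁ ^ 2) (x₂ ^ 2) = 1 ∧
      x₂ ^ 2 - x₁ ^ 2 = d ∧
      x₃ ^ n - x₂ ^ 2 = d ∧
      x₄ ^ 2 - x₃ ^ n = d ∧
      x₅ ^ 2 - x₄ ^ 2 = d :=
  no_AP_22n22_general n
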